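/- Let E be a number field of class number one, L = E[π] a quadratic étale E-algebra with π integral over O_E with minimal polynomial x² − ax + s over E (a, s ∈ O_E), and let S ⊆ L be an O_E-order containing π with conductor generated by b ∈ O_E, and u ∈ O_E with 2u − a ∈ (b), u² − au + s ∈ (b²). Then the matrix σ = [[u, −(u² − au + s)/b], [b, a − u]] has entries in O_E, has characteristic polynomial x² − ax + s, and represents the multiplication-by-π map on S in the O_E-basis (1, (π − u)/b). -/

import Mathlib

/-!
The conductor `(b)` gives `b S ⊆ O[π] = O ⊕ O π`, so `S` is described by the lattice of pairs
`(m, n)` with `(m + n π) / b ∈ S`. The second coordinates form an ideal `(g)` which also contains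
the first ones (multiply by `π`); then `(b / g) S ⊆ O[π]`, so `b ∣ b / g` and `g` is a unit.
The values `m + u n` form an ideal `(h)` with `h ∣ b`; squaring an element realising `h` gives
`h² ≡ 0` modulo `b h`, because `b² ∣ u² - a u + s`, so `b ∣ h`. Hence every element of `S` is
`c + n e₂` with `c ∈ O`, and `e₂ ∈ S`. The matrix identities only use `π² = a π - s`.
-/

open NumberField Polynomial

theorem Submodule.exists_basis_pair {R M : Type*} [CommRing R] [AddCommGroup M] [Module R M]
    {p : Submodule R M} {x y : M} (hli : LinearIndependent R ![x, y])
    (hspan : span R {x, y} = p) : ∃ B : Module.Basis (Fin 2) R p, (B 0 : M) = x ∧ (B 1 : M) = y :=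
  ⟨(Module.Basis.span hli).map (LinearEquiv.ofEq _ _ (by rwa [Matrix.range_cons_cons_empty])),
    by simp, by simp⟩

theorem Ideal.le_span_singleton_of_sq_mem {R : Type*} [CommRing R] [IsDomain R]
    [IsPrincipalIdealRing R] {J : Ideal R} {b : R} (hb : b ≠ 0) (hbJ : b ∈ J)
    (hsq : ∀ j ∈ J, ∃ j' ∈ J, ∃ r, j ^ 2 = b * j' + b ^ 2 * r) : J ≤ Ideal.span {b} := by
  obtain ⟨h, rfl⟩ := (IsPrincipalIdealRing.principal J).principal
  have hdvd : ∀ j ∈ Ideal.span {h}, h ∣ j := fun j hj => Ideal.mem_span_singleton.mp hj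
  obtain ⟨l, rfl⟩ := hdvd b hbJ
  obtain ⟨j', hj', r, hr⟩ := hsq h (Ideal.mem_span_singleton_self h)
  obtain ⟨k, rfl⟩ := hdvd j' hj'
  have hh : h ≠ 0 := left_ne_zero_of_mul hb
  have : h = h * l * (k + l * r) := mul_left_cancel₀ hh (by linear_combination hr)
  exact Ideal.span_singleton_le_span_singleton.mpr ⟨k + l * r, this⟩

section QuadraticOrder

variable {R A : Type*} [CommRing R] [CommRing A] [Algebra R A] {π : A} {a s : R}

theorem mem_adjoin_singleton_iff_of_quadratic
    (hquad : π ^ 2 - algebraMap R A a * π + algebraMap R A s = 0) {x : A} :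
    x ∈ Algebra.adjoin R {π} ↔ ∃ m n : R, algebraMap R A m + algebraMap R A n * π = x := by
  refine ⟨fun hx => ?_, ?_⟩
  · induction hx using Algebra.adjoin_induction with
    | mem x hx => exact ⟨0, 1, by simp [Set.mem_singleton_iff.mp hx]⟩
    | algebraMap r => exact ⟨r, 0, by simp⟩
    | add x y _ _ hx hy =>
      obtain ⟨m, n, rfl⟩ := hx
      obtain ⟨m', n', rfl⟩ := hy
      exact ⟨m + m', n + n', by simp only [map_add]; ring⟩
    | mul x y _ _ hx hy =>
      obtain ⟨m, n, rfl⟩ := hx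
      obtain ⟨m', n', rfl⟩ := hy
      refine ⟨m * m' - n * n' * s, m * n' + n * m' + n * n' * a, ?_⟩
      simp only [map_add, map_sub, map_mul]
      linear_combination (-(algebraMap R A n * algebraMap R A n')) * hquad
  · rintro ⟨m, n, rfl⟩
    exact add_mem (Subalgebra.algebraMap_mem _ m)
      (mul_mem (Subalgebra.algebraMap_mem _ n) (Algebra.self_mem_adjoin_singleton R π))

theorem LinearIndependent.eq_of_algebraMap_add_mul_eq (hind : LinearIndependent R ![1, π])
    {m n m' n' : R}
    (h : algebraMap R A m + algebraMap R A n * π = algebraMap R A m' + algebraMap R A n' * π) :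
    m = m' ∧ n = n' :=
  hind.eq_of_pair (by simpa only [Algebra.smul_def, mul_one] using h)

theorem algebraMap_mul_left_cancel [IsDomain R] [Module.IsTorsionFree R A] {r : R} (hr : r ≠ 0)
    {x y : A} (h : algebraMap R A r * x = algebraMap R A r * y) : x = y :=
  smul_right_injective A hr (by simpa only [Algebra.smul_def] using h)

/-- The pairs `(m, n)` with `(m + n π) / b ∈ S`. -/
def Subalgebra.numerators (S : Subalgebra R A) (π : A) (b : R) : Submodule R (R × R) :=
  ((Subalgebra.toSubmodule S).map (b • LinearMap.id)).comap
    ((LinearMap.toSpanSingleton R A 1).coprod (LinearMap.toSpanSingleton R A π))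

theorem Subalgebra.mem_numerators {S : Subalgebra R A} {b : R} {p : R × R} :
    p ∈ S.numerators π b ↔
      ∃ x ∈ S, algebraMap R A b * x = algebraMap R A p.1 + algebraMap R A p.2 * π := by
  simp [numerators, Algebra.smul_def]

theorem ne_zero_of_algebraMap_mul_eq_sub [Nontrivial R] (hind : LinearIndependent R ![1, π])
    {b u : R} {e₂ : A} (he₂ : algebraMap R A b * e₂ = π - algebraMap R A u) : b ≠ 0 := by
  rintro rfl
  have h : algebraMap R A 0 + algebraMap R A 1 * π = algebraMap R A u + algebraMap R A 0 * π := by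
    simp only [map_zero, map_one, zero_mul, zero_add, one_mul, add_zero] at he₂ ⊢
    linear_combination -he₂
  exact one_ne_zero (hind.eq_of_algebraMap_add_mul_eq h).2

theorem linearIndependent_one_of_algebraMap_mul_eq_sub [IsDomain R]
    (hind : LinearIndependent R ![1, π]) {b u : R} {e₂ : A}
    (he₂ : algebraMap R A b * e₂ = π - algebraMap R A u) : LinearIndependent R ![1, e₂] := by
  refine LinearIndependent.pair_iff.mpr fun c₀ c₁ hc => ?_
  have h : algebraMap R A (b * c₀ - c₁ * u) + algebraMap R A c₁ * π =
      algebraMap R A 0 + algebraMap R A 0 * π := by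
    simp only [Algebra.smul_def, mul_one] at hc
    simp only [map_sub, map_mul, map_zero]
    linear_combination algebraMap R A b * hc - algebraMap R A c₁ * he₂
  obtain ⟨h₀, rfl⟩ := hind.eq_of_algebraMap_add_mul_eq h
  exact ⟨(mul_eq_zero.mp (by simpa using h₀)).resolve_left
    (ne_zero_of_algebraMap_mul_eq_sub hind he₂), rfl⟩

theorem exists_eq_add_mul_of_algebraMap_mul_eq [IsDomain R] [Module.IsTorsionFree R A]
    {b u m n : R} {x e₂ : A} (hb0 : b ≠ 0) (he₂ : algebraMap R A b * e₂ = π - algebraMap R A u)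
    (hx : algebraMap R A b * x = algebraMap R A m + algebraMap R A n * π) (hdvd : b ∣ m + u * n) :
    ∃ c : R, x = algebraMap R A c + algebraMap R A n * e₂ := by
  obtain ⟨c, hc⟩ := hdvd
  refine ⟨c, algebraMap_mul_left_cancel hb0 ?_⟩
  have hc' := congrArg (algebraMap R A) hc
  simp only [map_add, map_mul] at hc'
  linear_combination hx + hc' - algebraMap R A n * he₂

theorem mul_eq_of_algebraMap_mul_eq_sub [IsDomain R] [Module.IsTorsionFree R A]
    (hquad : π ^ 2 - algebraMap R A a * π + algebraMap R A s = 0) {b u v : R} {e₂ : A}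
    (hb0 : b ≠ 0) (he₂ : algebraMap R A b * e₂ = π - algebraMap R A u)
    (hv : b * v = u ^ 2 - a * u + s) :
    π * e₂ = algebraMap R A (-v) * 1 + algebraMap R A (a - u) * e₂ := by
  refine algebraMap_mul_left_cancel hb0 ?_
  have hv' := congrArg (algebraMap R A) hv
  simp only [map_mul, map_sub, map_add, map_pow] at hv'
  simp only [map_neg, map_sub]
  linear_combination (π - algebraMap R A a + algebraMap R A u) * he₂ + hquad + hv'

theorem Matrix.charpoly_fin_two_of_mul_eq [Nontrivial R] {b u v : R}
    (hv : b * v = u ^ 2 - a * u + s) :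
    Matrix.charpoly !![u, -v; b, a - u] = X ^ 2 - C a * X + C s := by
  rw [charpoly_fin_two, trace_fin_two_of, det_fin_two_of, add_sub_cancel,
    show u * (a - u) - -v * b = s by linear_combination hv]

namespace Subalgebra

variable {S : Subalgebra R A} {b : R}

theorem numerators_mul_mem (hquad : π ^ 2 - algebraMap R A a * π + algebraMap R A s = 0)
    (hπS : π ∈ S) {p : R × R} (hp : p ∈ S.numerators π b) :
    (-(s * p.2), p.1 + a * p.2) ∈ S.numerators π b := by
  obtain ⟨x, hx, hxp⟩ := mem_numerators.mp hp
  refine mem_numerators.mpr ⟨x * π, mul_mem hx hπS, ?_⟩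
  simp only [map_neg, map_add, map_mul]
  linear_combination π * hxp + algebraMap R A p.2 * hquad

variable (hb : Ideal.span {b} =
  (toSubmodule (Algebra.adjoin R {π})).colon (toSubmodule S))
include hb

theorem exists_numerators_of_mem (hquad : π ^ 2 - algebraMap R A a * π + algebraMap R A s = 0)
    {x : A} (hx : x ∈ S) : ∃ p ∈ S.numerators π b,
      algebraMap R A b * x = algebraMap R A p.1 + algebraMap R A p.2 * π := by
  have hbx := Submodule.mem_colon.mp (hb ▸ Ideal.mem_span_singleton_self b) x hx
  rw [Algebra.smul_def, mem_toSubmodule, mem_adjoin_singleton_iff_of_quadratic hquad] at hbx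
  obtain ⟨m, n, hmn⟩ := hbx
  exact ⟨(m, n), mem_numerators.mpr ⟨x, hx, hmn.symm⟩, hmn.symm⟩

theorem dvd_of_forall_mul_mem_adjoin {c : R}
    (hc : ∀ x ∈ S, algebraMap R A c * x ∈ Algebra.adjoin R {π}) : b ∣ c := by
  rw [← Ideal.mem_span_singleton, hb]
  exact Submodule.mem_colon.mpr fun x hx => by
    simpa only [Algebra.smul_def, mem_toSubmodule] using hc x hx

theorem exists_numerators_sq (hquad : π ^ 2 - algebraMap R A a * π + algebraMap R A s = 0)
    (hind : LinearIndependent R ![1, π]) {p : R × R} (hp : p ∈ S.numerators π b) :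
    ∃ q ∈ S.numerators π b,
      b * q.1 = p.1 ^ 2 - s * p.2 ^ 2 ∧ b * q.2 = 2 * p.1 * p.2 + a * p.2 ^ 2 := by
  obtain ⟨x, hx, hxp⟩ := mem_numerators.mp hp
  obtain ⟨q, hq, hxq⟩ := exists_numerators_of_mem hb hquad (mul_mem hx hx)
  refine ⟨q, hq, hind.eq_of_algebraMap_add_mul_eq ?_⟩
  simp only [map_add, map_sub, map_mul, map_pow, map_ofNat]
  linear_combination -algebraMap R A b * hxq + (algebraMap R A b * x + algebraMap R A p.1 +
    algebraMap R A p.2 * π) * hxp + algebraMap R A p.2 ^ 2 * hquad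

theorem exists_numerators_snd_eq_one [IsDomain R] [IsPrincipalIdealRing R]
    [Module.IsTorsionFree R A] (hquad : π ^ 2 - algebraMap R A a * π + algebraMap R A s = 0)
    (hπS : π ∈ S) (hb0 : b ≠ 0) : ∃ p ∈ S.numerators π b, p.2 = 1 := by
  set N : Ideal R := (S.numerators π b).map (LinearMap.snd R R R)
  obtain ⟨g, hg⟩ := (IsPrincipalIdealRing.principal N).principal
  have hdvd : ∀ p ∈ S.numerators π b, g ∣ p.1 ∧ g ∣ p.2 := by
    intro p hp
    have hmem : ∀ n ∈ N, g ∣ n := fun n hn => by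
      rwa [hg, Ideal.submodule_span_eq, Ideal.mem_span_singleton] at hn
    have h₁ := hmem _ ⟨_, numerators_mul_mem hquad hπS hp, rfl⟩
    have h₂ := hmem _ ⟨p, hp, rfl⟩
    exact ⟨by simpa using dvd_sub h₁ (h₂.mul_left a), h₂⟩
  obtain ⟨h, rfl⟩ : g ∣ b := (hdvd (0, b) (mem_numerators.mpr ⟨π, hπS, by simp⟩)).2
  have hg0 : g ≠ 0 := left_ne_zero_of_mul hb0
  obtain ⟨k, hk⟩ : g * h ∣ h := dvd_of_forall_mul_mem_adjoin hb fun x hx => by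
    obtain ⟨p, hp, hxp⟩ := exists_numerators_of_mem hb hquad hx
    obtain ⟨⟨m, hm⟩, ⟨n, hn⟩⟩ := hdvd p hp
    rw [mem_adjoin_singleton_iff_of_quadratic hquad]
    refine ⟨m, n, algebraMap_mul_left_cancel hg0 ?_⟩
    simp only [map_mul, hm, hn] at hxp ⊢
    linear_combination -hxp
  obtain ⟨p, hp, hp1⟩ : (1 : R) ∈ N := by
    rw [hg, Ideal.submodule_span_eq, Ideal.mem_span_singleton]
    exact ⟨k, mul_left_cancel₀ (right_ne_zero_of_mul hb0) (by linear_combination hk)⟩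
  exact ⟨p, hp, hp1⟩

theorem dvd_fst_add_mul_snd_of_mem_numerators [IsDomain R] [IsPrincipalIdealRing R]
    (hquad : π ^ 2 - algebraMap R A a * π + algebraMap R A s = 0)
    (hind : LinearIndependent R ![1, π]) (hb0 : b ≠ 0) {u : R}
    (hu : u ^ 2 - a * u + s ∈ Ideal.span {b ^ 2}) {p : R × R} (hp : p ∈ S.numerators π b) :
    b ∣ p.1 + u * p.2 := by
  obtain ⟨w, hw⟩ := Ideal.mem_span_singleton'.mp hu
  set J : Ideal R := (S.numerators π b).map (LinearMap.fst R R R + u • LinearMap.snd R R R)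
  have hbJ : b ∈ J := ⟨(b, 0), mem_numerators.mpr ⟨1, one_mem S, by simp⟩, by simp⟩
  have hJ : J ≤ Ideal.span {b} := by
    refine Ideal.le_span_singleton_of_sq_mem hb0 hbJ ?_
    rintro _ ⟨p, hp, rfl⟩
    obtain ⟨q, hq, h₁, h₂⟩ := exists_numerators_sq hb hquad hind hp
    refine ⟨_, ⟨q, hq, rfl⟩, p.2 ^ 2 * w, ?_⟩
    simp only [LinearMap.add_apply, LinearMap.smul_apply, LinearMap.fst_apply,
      LinearMap.snd_apply, smul_eq_mul]
    linear_combination -h₁ - u * h₂ - p.2 ^ 2 * hw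
  exact Ideal.mem_span_singleton.mp (hJ ⟨p, hp, rfl⟩)

theorem toSubmodule_eq_span_one_of_algebraMap_mul_eq_sub [IsDomain R] [IsPrincipalIdealRing R]
    [Module.IsTorsionFree R A] (hquad : π ^ 2 - algebraMap R A a * π + algebraMap R A s = 0)
    (hind : LinearIndependent R ![1, π]) (hπS : π ∈ S) {u : R}
    (hu : u ^ 2 - a * u + s ∈ Ideal.span {b ^ 2}) {e₂ : A}
    (he₂ : algebraMap R A b * e₂ = π - algebraMap R A u) :
    toSubmodule S = Submodule.span R {1, e₂} := by
  have hb0 := ne_zero_of_algebraMap_mul_eq_sub hind he₂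
  have hdvd {p : R × R} (hp : p ∈ S.numerators π b) : b ∣ p.1 + u * p.2 :=
    dvd_fst_add_mul_snd_of_mem_numerators hb hquad hind hb0 hu hp
  have he₂S : e₂ ∈ S := by
    obtain ⟨p, hp, hp1⟩ := exists_numerators_snd_eq_one hb hquad hπS hb0
    obtain ⟨x, hx, hxp⟩ := mem_numerators.mp hp
    obtain ⟨c, hc⟩ := exists_eq_add_mul_of_algebraMap_mul_eq hb0 he₂ hxp (hdvd hp)
    rw [hp1, map_one, one_mul, ← sub_eq_iff_eq_add'] at hc
    exact hc ▸ sub_mem hx (algebraMap_mem S c)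
  refine le_antisymm (fun x hx => ?_) (Submodule.span_le.mpr ?_)
  · obtain ⟨p, hp, hxp⟩ := exists_numerators_of_mem hb hquad hx
    obtain ⟨c, rfl⟩ := exists_eq_add_mul_of_algebraMap_mul_eq hb0 he₂ hxp (hdvd hp)
    exact Submodule.mem_span_pair.mpr ⟨c, p.2, by simp only [Algebra.smul_def, mul_one]⟩
  · exact Set.insert_subset_iff.mpr ⟨one_mem S, Set.singleton_subset_iff.mpr he₂S⟩

end Subalgebra

end QuadraticOrder

theorem integral_frobenius_matrix_represents {w : Type} (E L : Type w)
    [Field E] [NumberField E] (hcl : NumberField.classNumber E = 1)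
    [CommRing L] [Nontrivial L] [Algebra E L]
    [Algebra (𝓞 E) L] [IsScalarTower (𝓞 E) E L]
    (π : L) (a s : 𝓞 E)
    (hquad : π ^ 2 - algebraMap (𝓞 E) L a * π + algebraMap (𝓞 E) L s = 0)
    (hπ : π ∉ (algebraMap E L).range)
    (S : Subalgebra (𝓞 E) L) (hπS : π ∈ S)
    (b : 𝓞 E)
    (hb : Ideal.span {b} =
      (Subalgebra.toSubmodule (Algebra.adjoin (𝓞 E) ({π} : Set L))).colon
        (Subalgebra.toSubmodule S))
    (u : 𝓞 E)
    (hu2 : u ^ 2 - a * u + s ∈ Ideal.span {b ^ 2})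
    (e₂ : L) (he₂ : algebraMap (𝓞 E) L b * e₂ = π - algebraMap (𝓞 E) L u) :
    ∃ v : 𝓞 E,
      b * v = u ^ 2 - a * u + s ∧
      (∃ d : Module.Basis (Fin 2) (𝓞 E) S, (d 0 : L) = 1 ∧ (d 1 : L) = e₂) ∧
      Matrix.charpoly !![u, -v; b, a - u] = X ^ 2 - C a * X + C s ∧
      π * 1 = algebraMap (𝓞 E) L u * 1 + algebraMap (𝓞 E) L b * e₂ ∧
      π * e₂ = algebraMap (𝓞 E) L (-v) * 1 + algebraMap (𝓞 E) L (a - u) * e₂ := by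
  have : IsPrincipalIdealRing (𝓞 E) := NumberField.classNumber_eq_one_iff.mp hcl
  have : Module.IsTorsionFree (𝓞 E) L := .trans E
  have hind : LinearIndependent (𝓞 E) ![1, π] :=
    ((LinearIndependent.pair_iff' one_ne_zero).mpr fun c hc =>
      hπ ⟨c, by rwa [Algebra.algebraMap_eq_smul_one]⟩).restrict_scalars' (𝓞 E)
  have hb0 := ne_zero_of_algebraMap_mul_eq_sub hind he₂
  obtain ⟨t, ht⟩ := Ideal.mem_span_singleton'.mp hu2
  have hv : b * (t * b) = u ^ 2 - a * u + s := by rw [← ht]; ring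
  refine ⟨t * b, hv, ?_, Matrix.charpoly_fin_two_of_mul_eq hv, by rw [he₂]; ring,
    mul_eq_of_algebraMap_mul_eq_sub hquad hb0 he₂ hv⟩
  exact Submodule.exists_basis_pair (linearIndependent_one_of_algebraMap_mul_eq_sub hind he₂)
    (S.toSubmodule_eq_span_one_of_algebraMap_mul_eq_sub hb hquad hind hπS hu2 he₂).symm
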